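/- arXiv:2102.02065 — 6 statements merged into one kernel-verified Lean document; each statement's English description precedes it below -/
import Mathlib

section
/- If Δx_s ∈ ℝ^{n_x}, Δu_s ∈ ℝ^{n_u}, Δt_s ∈ ℝ, Δλ_s, Δλ', Δx' ∈ ℝ^{n_x} satisfy equations (E1), (E2), (E3), and (E4), then Δλ_s = P_s Δx_s − z_s − Γ_s Δt_s. (Modified costate relation at the switching stage, carrying an extra switching-time direction term.) -/
open Matrix

/-- Modified costate relation at the switching stage: (E1)–(E4) imply
`Δλ_s = P_s Δx_s − z_s − Γ_s Δt_s`. -/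
theorem switch_stage_costate_relation {nx nu : ℕ}
    (Qxxs P' : Matrix (Fin nx) (Fin nx) ℝ)
    (Quus : Matrix (Fin nu) (Fin nu) ℝ)
    (Qxus : Matrix (Fin nx) (Fin nu) ℝ)
    (As : Matrix (Fin nx) (Fin nx) ℝ) (Bs : Matrix (Fin nx) (Fin nu) ℝ)
    (hxs fs lxs xbs z' : Fin nx → ℝ) (hus lus : Fin nu → ℝ)
    (hQxxSymm : Qxxs.IsSymm) (hQuuSymm : Quus.IsSymm) (hP'Symm : P'.IsSymm)
    (Fs : Matrix (Fin nx) (Fin nx) ℝ) (hFs : Fs = Qxxs + Asᵀ * P' * As)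
    (Hs : Matrix (Fin nx) (Fin nu) ℝ) (hHs : Hs = Qxus + Asᵀ * P' * Bs)
    (Gs : Matrix (Fin nu) (Fin nu) ℝ) (hGs : Gs = Quus + Bsᵀ * P' * Bs)
    (hGsinv : IsUnit Gs)
    (Ks : Matrix (Fin nu) (Fin nx) ℝ) (hKs : Ks = -(Gs⁻¹ * Hsᵀ))
    (ks : Fin nu → ℝ) (hks : ks = -(Gs⁻¹ *ᵥ (Bsᵀ *ᵥ (P' *ᵥ xbs) - Bsᵀ *ᵥ z' + lus)))
    (Ps : Matrix (Fin nx) (Fin nx) ℝ) (hPs : Ps = Fs - Ksᵀ * Gs * Ks)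
    (zs : Fin nx → ℝ) (hzs : zs = Asᵀ *ᵥ (z' - P' *ᵥ xbs) - lxs - Hs *ᵥ ks)
    (ψxs : Fin nx → ℝ) (hψxs : ψxs = hxs + Asᵀ *ᵥ (P' *ᵥ fs))
    (ψus : Fin nu → ℝ) (hψus : ψus = hus + Bsᵀ *ᵥ (P' *ᵥ fs))
    (Γs : Fin nx → ℝ) (hΓs : Γs = ψxs + Ksᵀ *ᵥ ψus)
    (Δxs Δx' Δls Δl' : Fin nx → ℝ) (Δus : Fin nu → ℝ) (Δts : ℝ)
    (hE1 : Qxxs *ᵥ Δxs + Qxus *ᵥ Δus + Asᵀ *ᵥ Δl' - Δls - Δts • hxs + lxs = 0)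
    (hE2 : Qxusᵀ *ᵥ Δxs + Quus *ᵥ Δus + Bsᵀ *ᵥ Δl' - Δts • hus + lus = 0)
    (hE3 : As *ᵥ Δxs + Bs *ᵥ Δus - Δx' - Δts • fs + xbs = 0)
    (hE4 : Δl' = P' *ᵥ Δx' - z') :
    Δls = Ps *ᵥ Δxs - zs - Δts • Γs := by

  have hdet : IsUnit Gs.det := (Matrix.isUnit_iff_isUnit_det Gs).mp hGsinv
  have hGi : Gs⁻¹ * Gs = 1 := Matrix.nonsing_inv_mul Gs hdet
  have hGi' : Gs * Gs⁻¹ = 1 := Matrix.mul_nonsing_inv Gs hdet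
  have hGsymm : Gsᵀ = Gs := by
    rw [hGs]
    simp [Matrix.transpose_add, Matrix.transpose_mul, hQuuSymm.eq, hP'Symm.eq, Matrix.mul_assoc]
  have hGinvsymm : Gs⁻¹ᵀ = Gs⁻¹ := by
    rw [Matrix.transpose_nonsing_inv, hGsymm]
  have hKsT : Ksᵀ = -(Hs * Gs⁻¹) := by
    rw [hKs]; simp [Matrix.transpose_mul, hGinvsymm]
  have hKGK : Ksᵀ * Gs * Ks = Hs * Gs⁻¹ * Hsᵀ := by
    rw [hKsT, hKs]
    simp only [Matrix.neg_mul, Matrix.mul_neg, neg_neg]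
    rw [Matrix.mul_assoc (Hs * Gs⁻¹) Gs (Gs⁻¹ * Hsᵀ), ← Matrix.mul_assoc Gs Gs⁻¹ Hsᵀ,
      hGi', Matrix.one_mul]
  -- solve E3 for Δx'
  have h3 : Δx' = As *ᵥ Δxs + Bs *ᵥ Δus - Δts • fs + xbs := by
    linear_combination (norm := module) -hE3
  subst h3
  subst hE4
  -- solve E2 for Δus
  have h2' : Gs *ᵥ Δus = -(Hsᵀ *ᵥ Δxs) + Δts • ψus
      - (Bsᵀ *ᵥ (P' *ᵥ xbs) - Bsᵀ *ᵥ z' + lus) := by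
    rw [hGs, hHs, hψus]
    simp only [Matrix.transpose_add, Matrix.transpose_mul, Matrix.transpose_transpose,
      hP'Symm.eq, Matrix.add_mulVec, Matrix.sub_mulVec, ← Matrix.mulVec_mulVec,
      Matrix.mulVec_add, Matrix.mulVec_sub, Matrix.mulVec_smul, Matrix.neg_mulVec,
      Matrix.smul_mulVec] at hE2 ⊢
    linear_combination (norm := module) hE2
  have hu : Δus = Ks *ᵥ Δxs + ks + Δts • (Gs⁻¹ *ᵥ ψus) := by
    have h := congrArg (fun v => Gs⁻¹ *ᵥ v) h2'
    simp only [Matrix.mulVec_mulVec, hGi, Matrix.one_mulVec, Matrix.mulVec_add,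
      Matrix.mulVec_sub, Matrix.mulVec_smul, Matrix.mulVec_neg] at h
    rw [h, hKs, hks]
    simp only [Matrix.neg_mulVec, ← Matrix.mulVec_mulVec, Matrix.mulVec_add,
      Matrix.mulVec_sub, Matrix.mulVec_smul, Matrix.mulVec_neg,
      Matrix.smul_mulVec]
    module
  subst hu
  -- now conclude from E1
  rw [hPs, hzs, hΓs, hKGK, hFs, hψxs, hKsT, hHs, hks, hψus]
  rw [hKs, hks, hψus] at hE1
  simp only [hHs, Matrix.transpose_add, Matrix.transpose_mul, Matrix.transpose_transpose,
    hP'Symm.eq, Matrix.add_mulVec, Matrix.sub_mulVec, ← Matrix.mulVec_mulVec,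
    Matrix.mulVec_add, Matrix.mulVec_sub, Matrix.mulVec_smul, Matrix.neg_mulVec,
    Matrix.mulVec_neg, Matrix.smul_mulVec] at hE1 ⊢
  linear_combination (norm := module) -hE1
end

section
/- Suppose Δx_s ∈ ℝ^{n_x}, Δu_s ∈ ℝ^{n_u}, Δt_s ∈ ℝ, Δλ', Δx' ∈ ℝ^{n_x} satisfy equations (E2), (E3), and (E4), and let Δx_i ∈ ℝ^{n_x}, Δu_i ∈ ℝ^{n_u}, Δλ_s ∈ ℝ^{n_x} be arbitrary. Then the linearized Hamiltonian-continuity (switching) equation h_{x,i}ᵀ Δx_i + h_{u,i}ᵀ Δu_i + f_iᵀ Δλ_s − h_{x,s}ᵀ Δx_s − h_{u,s}ᵀ Δu_s − f_sᵀ Δλ' + h̄_s = 0 holds if and only if the condensed equation h_{x,i}ᵀ Δx_i + h_{u,i}ᵀ Δu_i + f_iᵀ Δλ_s + ξ_s Δt_s − Γ_sᵀ Δx_s + η_s = 0 holds. (Condensation of the linearized switching condition by eliminating Δu_s, Δλ', and Δx'.) -/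
open Matrix

private lemma tdot {m n : ℕ} (A : Matrix (Fin m) (Fin n) ℝ) (x : Fin m → ℝ) (y : Fin n → ℝ) :
    x ⬝ᵥ (A *ᵥ y) = (Aᵀ *ᵥ x) ⬝ᵥ y := by
  rw [Matrix.dotProduct_mulVec, Matrix.mulVec_transpose]

/-- Condensation of the linearized switching condition: under (E2), (E3), (E4),
the linearized Hamiltonian-continuity equation holds iff its condensed form holds. -/
theorem switching_condition_condensation {nx nu : ℕ}
    (Qxxs P' : Matrix (Fin nx) (Fin nx) ℝ)
    (Quus : Matrix (Fin nu) (Fin nu) ℝ)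
    (Qxus : Matrix (Fin nx) (Fin nu) ℝ)
    (As : Matrix (Fin nx) (Fin nx) ℝ) (Bs : Matrix (Fin nx) (Fin nu) ℝ)
    (hxs fs lxs xbs z' : Fin nx → ℝ) (hus lus : Fin nu → ℝ) (hbs : ℝ)
    (hxi fi : Fin nx → ℝ) (hui : Fin nu → ℝ)
    (hQxxSymm : Qxxs.IsSymm) (hQuuSymm : Quus.IsSymm) (hP'Symm : P'.IsSymm)
    (Fs : Matrix (Fin nx) (Fin nx) ℝ) (hFs : Fs = Qxxs + Asᵀ * P' * As)
    (Hs : Matrix (Fin nx) (Fin nu) ℝ) (hHs : Hs = Qxus + Asᵀ * P' * Bs)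
    (Gs : Matrix (Fin nu) (Fin nu) ℝ) (hGs : Gs = Quus + Bsᵀ * P' * Bs)
    (hGsinv : IsUnit Gs)
    (Ks : Matrix (Fin nu) (Fin nx) ℝ) (hKs : Ks = -(Gs⁻¹ * Hsᵀ))
    (ks : Fin nu → ℝ) (hks : ks = -(Gs⁻¹ *ᵥ (Bsᵀ *ᵥ (P' *ᵥ xbs) - Bsᵀ *ᵥ z' + lus)))
    (ψxs : Fin nx → ℝ) (hψxs : ψxs = hxs + Asᵀ *ᵥ (P' *ᵥ fs))
    (ψus : Fin nu → ℝ) (hψus : ψus = hus + Bsᵀ *ᵥ (P' *ᵥ fs))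
    (Ts : Fin nu → ℝ) (hTs : Ts = -(Gs⁻¹ *ᵥ ψus))
    (Γs : Fin nx → ℝ) (hΓs : Γs = ψxs + Ksᵀ *ᵥ ψus)
    (ξs : ℝ) (hξs : ξs = fs ⬝ᵥ (P' *ᵥ fs) - ψus ⬝ᵥ (Gs⁻¹ *ᵥ ψus))
    (ηs : ℝ) (hηs : ηs = hbs - fs ⬝ᵥ (P' *ᵥ xbs - z') - ψus ⬝ᵥ ks)
    (Δxs Δx' Δl' : Fin nx → ℝ) (Δus : Fin nu → ℝ) (Δts : ℝ)
    (Δxi Δls : Fin nx → ℝ) (Δui : Fin nu → ℝ)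
    (hE2 : Qxusᵀ *ᵥ Δxs + Quus *ᵥ Δus + Bsᵀ *ᵥ Δl' - Δts • hus + lus = 0)
    (hE3 : As *ᵥ Δxs + Bs *ᵥ Δus - Δx' - Δts • fs + xbs = 0)
    (hE4 : Δl' = P' *ᵥ Δx' - z') :
    (hxi ⬝ᵥ Δxi + hui ⬝ᵥ Δui + fi ⬝ᵥ Δls
      - hxs ⬝ᵥ Δxs - hus ⬝ᵥ Δus - fs ⬝ᵥ Δl' + hbs = 0)
    ↔ (hxi ⬝ᵥ Δxi + hui ⬝ᵥ Δui + fi ⬝ᵥ Δls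
      + ξs * Δts - Γs ⬝ᵥ Δxs + ηs = 0) := by
  have hdet : IsUnit Gs.det := (Matrix.isUnit_iff_isUnit_det Gs).mp hGsinv
  have hGGi : Gs * Gs⁻¹ = 1 := Matrix.mul_nonsing_inv Gs hdet
  have hGsymm : Gsᵀ = Gs := by
    rw [hGs]
    simp [Matrix.transpose_add, Matrix.transpose_mul, hQuuSymm.eq, hP'Symm.eq, Matrix.mul_assoc]
  have hGinvSymm : (Gs⁻¹)ᵀ = Gs⁻¹ := by
    rw [Matrix.transpose_nonsing_inv, hGsymm]
  -- Express Δx' from (E3)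
  have hΔx' : Δx' = As *ᵥ Δxs + Bs *ᵥ Δus - Δts • fs + xbs := by
    linear_combination (norm := module) -hE3
  -- Express Δl' from (E4)
  have hDl : Δl' = P' *ᵥ (As *ᵥ Δxs) + P' *ᵥ (Bs *ᵥ Δus) - Δts • (P' *ᵥ fs)
      + P' *ᵥ xbs - z' := by
    rw [hE4, hΔx']
    simp only [Matrix.mulVec_add, Matrix.mulVec_sub, Matrix.mulVec_smul]
  -- The eliminated control equation
  have hGu : Gs *ᵥ Δus = Δts • ψus - (Bsᵀ *ᵥ (P' *ᵥ xbs) - Bsᵀ *ᵥ z' + lus)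
      - Hsᵀ *ᵥ Δxs := by
    have h2 := hE2
    rw [hDl] at h2
    rw [hGs, hHs, hψus]
    simp only [Matrix.add_mulVec, Matrix.transpose_add, Matrix.transpose_mul,
      Matrix.transpose_transpose, hP'Symm.eq, Matrix.mulVec_add, Matrix.mulVec_sub,
      Matrix.mulVec_smul, ← Matrix.mulVec_mulVec] at h2 ⊢
    linear_combination (norm := module) h2
  -- scalar consequence 1 : value of ψus ⬝ᵥ Δus
  have s1 : ψus ⬝ᵥ Δus = Δts * (ψus ⬝ᵥ (Gs⁻¹ *ᵥ ψus)) + ψus ⬝ᵥ ks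
      + (Ksᵀ *ᵥ ψus) ⬝ᵥ Δxs := by
    have e1 : ψus ⬝ᵥ Δus = (Gs⁻¹ *ᵥ ψus) ⬝ᵥ (Gs *ᵥ Δus) := by
      rw [tdot Gs (Gs⁻¹ *ᵥ ψus) Δus, Matrix.mulVec_mulVec, hGsymm, hGGi, Matrix.one_mulVec]
    rw [e1, hGu]
    rw [dotProduct_sub, dotProduct_sub, dotProduct_smul]
    have t1 : (Gs⁻¹ *ᵥ ψus) ⬝ᵥ ψus = ψus ⬝ᵥ (Gs⁻¹ *ᵥ ψus) := dotProduct_comm _ _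
    have t2 : (Gs⁻¹ *ᵥ ψus) ⬝ᵥ (Bsᵀ *ᵥ (P' *ᵥ xbs) - Bsᵀ *ᵥ z' + lus) = -(ψus ⬝ᵥ ks) := by
      rw [hks, dotProduct_neg, neg_neg, tdot Gs⁻¹ ψus _, hGinvSymm]
    have t3 : (Gs⁻¹ *ᵥ ψus) ⬝ᵥ (Hsᵀ *ᵥ Δxs) = -((Ksᵀ *ᵥ ψus) ⬝ᵥ Δxs) := by
      rw [tdot Hsᵀ (Gs⁻¹ *ᵥ ψus) Δxs, Matrix.transpose_transpose, hKs,
        Matrix.transpose_neg, Matrix.transpose_mul, Matrix.transpose_transpose, hGinvSymm,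
        Matrix.neg_mulVec, Matrix.mulVec_mulVec, neg_dotProduct, neg_neg]
    rw [t1, t2, t3]
    simp only [smul_eq_mul]
    ring
  -- scalar consequence 2 : value of fs ⬝ᵥ Δl'
  have s2 : fs ⬝ᵥ Δl' = (ψxs - hxs) ⬝ᵥ Δxs + (ψus - hus) ⬝ᵥ Δus
      - Δts * (fs ⬝ᵥ (P' *ᵥ fs)) + fs ⬝ᵥ (P' *ᵥ xbs) - fs ⬝ᵥ z' := by
    rw [hDl]
    rw [dotProduct_sub, dotProduct_add, dotProduct_sub,
      dotProduct_add, dotProduct_smul]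
    have u1 : fs ⬝ᵥ (P' *ᵥ (As *ᵥ Δxs)) = (ψxs - hxs) ⬝ᵥ Δxs := by
      rw [tdot P' fs (As *ᵥ Δxs), hP'Symm.eq, tdot As (P' *ᵥ fs) Δxs, hψxs]
      congr 1
      simp
    have u2 : fs ⬝ᵥ (P' *ᵥ (Bs *ᵥ Δus)) = (ψus - hus) ⬝ᵥ Δus := by
      rw [tdot P' fs (Bs *ᵥ Δus), hP'Symm.eq, tdot Bs (P' *ᵥ fs) Δus, hψus]
      congr 1
      simp
    rw [u1, u2]
    simp only [smul_eq_mul]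
  -- assemble
  have key : - (hxs ⬝ᵥ Δxs) - hus ⬝ᵥ Δus - fs ⬝ᵥ Δl' + hbs
      = ξs * Δts - Γs ⬝ᵥ Δxs + ηs := by
    rw [s2, hξs, hηs, hΓs, add_dotProduct, sub_dotProduct,
      sub_dotProduct, dotProduct_sub]
    have : ψus ⬝ᵥ Δus = Δts * (ψus ⬝ᵥ (Gs⁻¹ *ᵥ ψus)) + ψus ⬝ᵥ ks
        + (Ksᵀ *ᵥ ψus) ⬝ᵥ Δxs := s1
    linarith
  constructor <;> intro h <;> linarith [key]
end

section
/- Suppose Δx_i ∈ ℝ^{n_x}, Δu_i ∈ ℝ^{n_u}, Δt_s ∈ ℝ, Δx_s, Δλ_s ∈ ℝ^{n_x} satisfy equation (F2), equation (F3), the modified costate relation Δλ_s = P_s Δx_s − z_s − Γ_s Δt_s, and the condensed switching equation h_{x,i}ᵀ Δx_i + h_{u,i}ᵀ Δu_i + f_iᵀ Δλ_s + ξ_s Δt_s − Γ_sᵀ Δx_s + η_s = 0. Then Γ_iᵀ Δx_i + ξ̃_s Δt_s + η̃_s = 0; in particular, if ξ̃_s ≠ 0, then the Newton direction of the switching instant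 is Δt_s = −ξ̃_s⁻¹ (Γ_iᵀ Δx_i + η̃_s). -/
open Matrix

/-- transpose flip for dot products -/
private lemma dp_flip {m n : ℕ} (M : Matrix (Fin m) (Fin n) ℝ) (u : Fin m → ℝ)
    (v : Fin n → ℝ) : (Mᵀ *ᵥ u) ⬝ᵥ v = u ⬝ᵥ (M *ᵥ v) := by
  rw [Matrix.mulVec_transpose, ← Matrix.dotProduct_mulVec]

/-- The Newton direction of the switching instant: under (F2), (F3), the modified
costate relation and the condensed switching equation, one has
`Γ_iᵀ Δx_i + ξ̃_s Δt_s + η̃_s = 0`, hence `Δt_s = −ξ̃_s⁻¹ (Γ_iᵀ Δx_i + η̃_s)`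
whenever `ξ̃_s ≠ 0`. -/
theorem switching_time_direction {nx nu : ℕ}
    (Ps : Matrix (Fin nx) (Fin nx) ℝ) (hPsSymm : Ps.IsSymm)
    (zs Γs : Fin nx → ℝ) (ξs ηs : ℝ)
    (Qxxi : Matrix (Fin nx) (Fin nx) ℝ)
    (Quui : Matrix (Fin nu) (Fin nu) ℝ)
    (Qxui : Matrix (Fin nx) (Fin nu) ℝ)
    (Ai : Matrix (Fin nx) (Fin nx) ℝ) (Bi : Matrix (Fin nx) (Fin nu) ℝ)
    (hxi fi lxi xbi : Fin nx → ℝ) (hui lui : Fin nu → ℝ)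
    (hQxxSymm : Qxxi.IsSymm) (hQuuSymm : Quui.IsSymm)
    (Fi : Matrix (Fin nx) (Fin nx) ℝ) (hFi : Fi = Qxxi + Aiᵀ * Ps * Ai)
    (Hi : Matrix (Fin nx) (Fin nu) ℝ) (hHi : Hi = Qxui + Aiᵀ * Ps * Bi)
    (Gi : Matrix (Fin nu) (Fin nu) ℝ) (hGi : Gi = Quui + Biᵀ * Ps * Bi)
    (hGiinv : IsUnit Gi)
    (Ki : Matrix (Fin nu) (Fin nx) ℝ) (hKi : Ki = -(Gi⁻¹ * Hiᵀ))
    (ki : Fin nu → ℝ) (hki : ki = -(Gi⁻¹ *ᵥ (Biᵀ *ᵥ (Ps *ᵥ xbi) - Biᵀ *ᵥ zs + lui)))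
    (ψxi : Fin nx → ℝ) (hψxi : ψxi = hxi + Aiᵀ *ᵥ (Ps *ᵥ fi) - Aiᵀ *ᵥ Γs)
    (ψui : Fin nu → ℝ) (hψui : ψui = hui + Biᵀ *ᵥ (Ps *ᵥ fi) - Biᵀ *ᵥ Γs)
    (Ti : Fin nu → ℝ) (hTi : Ti = -(Gi⁻¹ *ᵥ ψui))
    (Γi : Fin nx → ℝ) (hΓi : Γi = ψxi + Kiᵀ *ᵥ ψui)
    (ξts : ℝ) (hξts : ξts = ξs - 2 * (Γs ⬝ᵥ fi) + fi ⬝ᵥ (Ps *ᵥ fi) - ψui ⬝ᵥ (Gi⁻¹ *ᵥ ψui))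
    (ηts : ℝ) (hηts : ηts = ηs - Γs ⬝ᵥ xbi + fi ⬝ᵥ (Ps *ᵥ xbi - zs) + ψui ⬝ᵥ ki)
    (Δxi Δxs Δls : Fin nx → ℝ) (Δui : Fin nu → ℝ) (Δts : ℝ)
    (hF2 : Qxuiᵀ *ᵥ Δxi + Quui *ᵥ Δui + Biᵀ *ᵥ Δls + Δts • hui + lui = 0)
    (hF3 : Ai *ᵥ Δxi + Bi *ᵥ Δui - Δxs + Δts • fi + xbi = 0)
    (hcostate : Δls = Ps *ᵥ Δxs - zs - Δts • Γs)
    (hswitch : hxi ⬝ᵥ Δxi + hui ⬝ᵥ Δui + fi ⬝ᵥ Δls + ξs * Δts - Γs ⬝ᵥ Δxs + ηs = 0) :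
    Γi ⬝ᵥ Δxi + ξts * Δts + ηts = 0 ∧
      (ξts ≠ 0 → Δts = -(ξts⁻¹ * (Γi ⬝ᵥ Δxi + ηts))) := by
  have hGdet : IsUnit Gi.det := (Matrix.isUnit_iff_isUnit_det Gi).mp hGiinv
  have hGmul : Gi * Gi⁻¹ = 1 := Matrix.mul_nonsing_inv Gi hGdet
  have hGsymm : Giᵀ = Gi := by
    rw [hGi, Matrix.transpose_add, Matrix.transpose_mul, Matrix.transpose_mul,
      Matrix.transpose_transpose, hPsSymm.eq, hQuuSymm.eq, Matrix.mul_assoc]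
  have hGinvsymm : (Gi⁻¹)ᵀ = Gi⁻¹ := by
    rw [Matrix.transpose_nonsing_inv, hGsymm]
  set s : Fin nu → ℝ := Gi⁻¹ *ᵥ ψui with hs
  have hPsflip : ∀ u v : Fin nx → ℝ, (Ps *ᵥ u) ⬝ᵥ v = u ⬝ᵥ (Ps *ᵥ v) := by
    intro u v
    conv_lhs => rw [← hPsSymm.eq]
    exact dp_flip Ps u v
  have hΔxs : Δxs = Ai *ᵥ Δxi + Bi *ᵥ Δui + Δts • fi + xbi := by
    funext j
    have h := congrFun hF3 j
    simp only [Pi.add_apply, Pi.sub_apply, Pi.smul_apply, Pi.zero_apply, smul_eq_mul] at h ⊢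
    linarith
  -- F2 dotted with s, fully expanded
  have h := congrArg (fun w => s ⬝ᵥ w) hF2
  rw [hcostate, hΔxs] at h
  simp only [Matrix.mulVec_add, Matrix.mulVec_sub, Matrix.mulVec_smul,
    dotProduct_add, dotProduct_sub, dotProduct_smul, smul_eq_mul,
    dotProduct_zero] at h
  -- combine Quui and BᵀPsB contributions into Gi
  have e1 : s ⬝ᵥ (Quui *ᵥ Δui) + s ⬝ᵥ (Biᵀ *ᵥ (Ps *ᵥ (Bi *ᵥ Δui))) = ψui ⬝ᵥ Δui := by
    have hg : Quui *ᵥ Δui + Biᵀ *ᵥ (Ps *ᵥ (Bi *ᵥ Δui)) = Gi *ᵥ Δui := by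
      rw [hGi, Matrix.add_mulVec, Matrix.mulVec_mulVec, Matrix.mulVec_mulVec]
    rw [← dotProduct_add, hg, ← dp_flip Gi s Δui, hGsymm, hs,
      Matrix.mulVec_mulVec, hGmul, Matrix.one_mulVec]
  have e2 : s ⬝ᵥ (Qxuiᵀ *ᵥ Δxi) + s ⬝ᵥ (Biᵀ *ᵥ (Ps *ᵥ (Ai *ᵥ Δxi))) = (Hi *ᵥ s) ⬝ᵥ Δxi := by
    have hh : Qxuiᵀ *ᵥ Δxi + Biᵀ *ᵥ (Ps *ᵥ (Ai *ᵥ Δxi)) = Hiᵀ *ᵥ Δxi := by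
      rw [hHi, Matrix.transpose_add, Matrix.transpose_mul, Matrix.transpose_mul,
        Matrix.transpose_transpose, hPsSymm.eq, Matrix.add_mulVec,
        Matrix.mulVec_mulVec, Matrix.mulVec_mulVec, Matrix.mul_assoc]
    rw [← dotProduct_add, hh, ← dp_flip Hiᵀ s Δxi, Matrix.transpose_transpose]
  have e3 : s ⬝ᵥ hui + s ⬝ᵥ (Biᵀ *ᵥ (Ps *ᵥ fi)) - s ⬝ᵥ (Biᵀ *ᵥ Γs) = ψui ⬝ᵥ s := by
    rw [hψui, sub_dotProduct, add_dotProduct,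
      dotProduct_comm s hui, dotProduct_comm s (Biᵀ *ᵥ (Ps *ᵥ fi)),
      dotProduct_comm s (Biᵀ *ᵥ Γs)]
  have h1 : ψui ⬝ᵥ Δui + ((Hi *ᵥ s) ⬝ᵥ Δxi + Δts * (ψui ⬝ᵥ s)
      + (s ⬝ᵥ (Biᵀ *ᵥ (Ps *ᵥ xbi)) - s ⬝ᵥ (Biᵀ *ᵥ zs) + s ⬝ᵥ lui)) = 0 := by
    linear_combination h - e1 - e2 - Δts * e3
  -- the switching equation, fully expanded
  have h2 := hswitch
  rw [hcostate, hΔxs] at h2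
  simp only [Matrix.mulVec_add, Matrix.mulVec_sub, Matrix.mulVec_smul,
    dotProduct_add, dotProduct_sub, dotProduct_smul, smul_eq_mul] at h2
  -- rewrite the Ps-dot-products in h2 into the canonical orientation
  have g1 : Γi ⬝ᵥ Δxi = hxi ⬝ᵥ Δxi + fi ⬝ᵥ (Ps *ᵥ (Ai *ᵥ Δxi)) - Γs ⬝ᵥ (Ai *ᵥ Δxi)
      - (Hi *ᵥ s) ⬝ᵥ Δxi := by
    have hK' : Kiᵀ *ᵥ ψui = -(Hi *ᵥ s) := by
      rw [hKi, Matrix.transpose_neg, Matrix.transpose_mul, hGinvsymm,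
        Matrix.transpose_transpose, Matrix.neg_mulVec, ← Matrix.mulVec_mulVec, ← hs]
    rw [hΓi, add_dotProduct, hK', hψxi, sub_dotProduct, add_dotProduct,
      dp_flip Ai (Ps *ᵥ fi) Δxi, hPsflip fi (Ai *ᵥ Δxi), dp_flip Ai Γs Δxi,
      neg_dotProduct]
    ring
  have g2 : ψui ⬝ᵥ Δui = hui ⬝ᵥ Δui + fi ⬝ᵥ (Ps *ᵥ (Bi *ᵥ Δui)) - Γs ⬝ᵥ (Bi *ᵥ Δui) := by
    rw [hψui, sub_dotProduct, add_dotProduct,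
      dp_flip Bi (Ps *ᵥ fi) Δui, hPsflip fi (Bi *ᵥ Δui), dp_flip Bi Γs Δui]
  have g4 : ψui ⬝ᵥ ki
      = -(s ⬝ᵥ (Biᵀ *ᵥ (Ps *ᵥ xbi)) - s ⬝ᵥ (Biᵀ *ᵥ zs) + s ⬝ᵥ lui) := by
    have hGinvflip : ∀ (u v : Fin nu → ℝ), (Gi⁻¹ *ᵥ u) ⬝ᵥ v = u ⬝ᵥ (Gi⁻¹ *ᵥ v) := by
      intro u v
      conv_lhs => rw [← hGinvsymm]
      exact dp_flip Gi⁻¹ u v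
    rw [hki, dotProduct_neg, ← hGinvflip ψui, ← hs,
      dotProduct_add, dotProduct_sub]
  have g5 : fi ⬝ᵥ (Ps *ᵥ xbi - zs) = fi ⬝ᵥ (Ps *ᵥ xbi) - fi ⬝ᵥ zs :=
    dotProduct_sub fi _ _
  have g6 : fi ⬝ᵥ Γs = Γs ⬝ᵥ fi := dotProduct_comm fi Γs
  have main : Γi ⬝ᵥ Δxi + ξts * Δts + ηts = 0 := by
    linear_combination g1 + Δts * hξts + hηts + g5 + g4 + h2 - h1 + g2 + Δts * g6
  refine ⟨main, fun hne => ?_⟩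
  field_simp
  linarith [main]
end

section
/- Suppose ξ̃_s ≠ 0 and that Δx_i ∈ ℝ^{n_x}, Δu_i ∈ ℝ^{n_u}, Δλ_i ∈ ℝ^{n_x}, Δt_s ∈ ℝ, Δx_s, Δλ_s ∈ ℝ^{n_x} satisfy equations (F1), (F2), (F3), the modified costate relation Δλ_s = P_s Δx_s − z_s − Γ_s Δt_s, and the condensed switching equation h_{x,i}ᵀ Δx_i + h_{u,i}ᵀ Δu_i + f_iᵀ Δλ_s + ξ_s Δt_s − Γ_sᵀ Δx_s + η_s = 0. Then Δλ_i = P_i Δx_i − z_i, where P_i = F_i − K_iᵀ G_i K_i − ξ̃_s⁻¹ Γ_i Γ_iᵀ and z_i = A_iᵀ (z_s − P_s x̄_i) − l̄_{x,i} − H_i k_i + ξ̃_s⁻¹ Γ_i η̃_s. (The backward Riccati recursion formulas at the pre-switch stage.) -/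
open Matrix

private lemma vecMulVec_mulVec' {n m : ℕ} (a : Fin n → ℝ) (b x : Fin m → ℝ) :
    vecMulVec a b *ᵥ x = (b ⬝ᵥ x) • a := by
  ext i
  simp only [mulVec, dotProduct, vecMulVec_apply, Pi.smul_apply, smul_eq_mul, Finset.sum_mul]
  refine Finset.sum_congr rfl fun j _ => by ring


/-- The backward Riccati recursion formulas at the pre-switch stage:
under (F1)–(F3), the modified costate relation and the condensed switching
equation, one has `Δλ_i = P_i Δx_i − z_i` with the stated `P_i`, `z_i`. -/
theorem preswitch_riccati_recursion {nx nu : ℕ}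
    (Ps : Matrix (Fin nx) (Fin nx) ℝ) (hPsSymm : Ps.IsSymm)
    (zs Γs : Fin nx → ℝ) (ξs ηs : ℝ)
    (Qxxi : Matrix (Fin nx) (Fin nx) ℝ)
    (Quui : Matrix (Fin nu) (Fin nu) ℝ)
    (Qxui : Matrix (Fin nx) (Fin nu) ℝ)
    (Ai : Matrix (Fin nx) (Fin nx) ℝ) (Bi : Matrix (Fin nx) (Fin nu) ℝ)
    (hxi fi lxi xbi : Fin nx → ℝ) (hui lui : Fin nu → ℝ)
    (hQxxSymm : Qxxi.IsSymm) (hQuuSymm : Quui.IsSymm)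
    (Fi : Matrix (Fin nx) (Fin nx) ℝ) (hFi : Fi = Qxxi + Aiᵀ * Ps * Ai)
    (Hi : Matrix (Fin nx) (Fin nu) ℝ) (hHi : Hi = Qxui + Aiᵀ * Ps * Bi)
    (Gi : Matrix (Fin nu) (Fin nu) ℝ) (hGi : Gi = Quui + Biᵀ * Ps * Bi)
    (hGiinv : IsUnit Gi)
    (Ki : Matrix (Fin nu) (Fin nx) ℝ) (hKi : Ki = -(Gi⁻¹ * Hiᵀ))
    (ki : Fin nu → ℝ) (hki : ki = -(Gi⁻¹ *ᵥ (Biᵀ *ᵥ (Ps *ᵥ xbi) - Biᵀ *ᵥ zs + lui)))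
    (ψxi : Fin nx → ℝ) (hψxi : ψxi = hxi + Aiᵀ *ᵥ (Ps *ᵥ fi) - Aiᵀ *ᵥ Γs)
    (ψui : Fin nu → ℝ) (hψui : ψui = hui + Biᵀ *ᵥ (Ps *ᵥ fi) - Biᵀ *ᵥ Γs)
    (Ti : Fin nu → ℝ) (hTi : Ti = -(Gi⁻¹ *ᵥ ψui))
    (Γi : Fin nx → ℝ) (hΓi : Γi = ψxi + Kiᵀ *ᵥ ψui)
    (ξts : ℝ) (hξts : ξts = ξs - 2 * (Γs ⬝ᵥ fi) + fi ⬝ᵥ (Ps *ᵥ fi) - ψui ⬝ᵥ (Gi⁻¹ *ᵥ ψui))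
    (ηts : ℝ) (hηts : ηts = ηs - Γs ⬝ᵥ xbi + fi ⬝ᵥ (Ps *ᵥ xbi - zs) + ψui ⬝ᵥ ki)
    (hξtsne : ξts ≠ 0)
    (Pi : Matrix (Fin nx) (Fin nx) ℝ)
    (hPi : Pi = Fi - Kiᵀ * Gi * Ki - ξts⁻¹ • vecMulVec Γi Γi)
    (zi : Fin nx → ℝ)
    (hzi : zi = Aiᵀ *ᵥ (zs - Ps *ᵥ xbi) - lxi - Hi *ᵥ ki + (ξts⁻¹ * ηts) • Γi)
    (Δxi Δxs Δli Δls : Fin nx → ℝ) (Δui : Fin nu → ℝ) (Δts : ℝ)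
    (hF1 : Qxxi *ᵥ Δxi + Qxui *ᵥ Δui + Aiᵀ *ᵥ Δls - Δli + Δts • hxi + lxi = 0)
    (hF2 : Qxuiᵀ *ᵥ Δxi + Quui *ᵥ Δui + Biᵀ *ᵥ Δls + Δts • hui + lui = 0)
    (hF3 : Ai *ᵥ Δxi + Bi *ᵥ Δui - Δxs + Δts • fi + xbi = 0)
    (hcostate : Δls = Ps *ᵥ Δxs - zs - Δts • Γs)
    (hswitch : hxi ⬝ᵥ Δxi + hui ⬝ᵥ Δui + fi ⬝ᵥ Δls + ξs * Δts - Γs ⬝ᵥ Δxs + ηs = 0) :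
    Δli = Pi *ᵥ Δxi - zi := by
  have hPsT : Psᵀ = Ps := hPsSymm
  have hdet : IsUnit Gi.det := (Matrix.isUnit_iff_isUnit_det Gi).mp hGiinv
  have hGinvG : Gi⁻¹ * Gi = 1 := Matrix.nonsing_inv_mul Gi hdet
  have hGGinv : Gi * Gi⁻¹ = 1 := Matrix.mul_nonsing_inv Gi hdet
  have hGT : Giᵀ = Gi := by
    rw [hGi]
    simp [Matrix.transpose_add, Matrix.transpose_mul, Matrix.transpose_transpose, hPsT,
      hQuuSymm.eq, Matrix.mul_assoc]
  have hGinvT : Gi⁻¹ᵀ = Gi⁻¹ := by rw [Matrix.transpose_nonsing_inv, hGT]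
  have hHT : Hiᵀ = Qxuiᵀ + Biᵀ * Ps * Ai := by
    rw [hHi]
    simp [Matrix.transpose_add, Matrix.transpose_mul, Matrix.transpose_transpose, hPsT,
      Matrix.mul_assoc]
  have hKiT : Kiᵀ = -(Hi * Gi⁻¹) := by
    rw [hKi]
    simp [Matrix.transpose_neg, Matrix.transpose_mul, Matrix.transpose_transpose, hGinvT]
  -- dot product transpose helpers
  have hdotT : ∀ {m k : ℕ} (M : Matrix (Fin m) (Fin k) ℝ) (a : Fin m → ℝ) (b : Fin k → ℝ),
      a ⬝ᵥ (M *ᵥ b) = (Mᵀ *ᵥ a) ⬝ᵥ b := by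
    intro m k M a b
    rw [dotProduct_mulVec, mulVec_transpose]
  have hdotPs : ∀ v : Fin nx → ℝ, fi ⬝ᵥ (Ps *ᵥ v) = (Ps *ᵥ fi) ⬝ᵥ v := by
    intro v
    rw [hdotT Ps fi v, hPsT]
  -- state dynamics
  have hΔxs : Δxs = Ai *ᵥ Δxi + Bi *ᵥ Δui + Δts • fi + xbi := by
    linear_combination (norm := module) -hF3
  have hΔls : Δls = Ps *ᵥ (Ai *ᵥ Δxi) + Ps *ᵥ (Bi *ᵥ Δui) + Δts • (Ps *ᵥ fi)
      + Ps *ᵥ xbi - zs - Δts • Γs := by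
    rw [hcostate, hΔxs]
    simp only [Matrix.mulVec_add, Matrix.mulVec_smul]
  have hBls : Biᵀ *ᵥ Δls = Biᵀ *ᵥ (Ps *ᵥ (Ai *ᵥ Δxi)) + Biᵀ *ᵥ (Ps *ᵥ (Bi *ᵥ Δui))
      + Δts • (Biᵀ *ᵥ (Ps *ᵥ fi)) + Biᵀ *ᵥ (Ps *ᵥ xbi) - Biᵀ *ᵥ zs - Δts • (Biᵀ *ᵥ Γs) := by
    rw [hΔls]
    simp only [Matrix.mulVec_add, Matrix.mulVec_sub, Matrix.mulVec_smul]
  have eG : Gi *ᵥ Δui = Quui *ᵥ Δui + Biᵀ *ᵥ (Ps *ᵥ (Bi *ᵥ Δui)) := by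
    rw [hGi, Matrix.add_mulVec]
    simp only [← Matrix.mulVec_mulVec]
  have eH : Hiᵀ *ᵥ Δxi = Qxuiᵀ *ᵥ Δxi + Biᵀ *ᵥ (Ps *ᵥ (Ai *ᵥ Δxi)) := by
    rw [hHT, Matrix.add_mulVec]
    simp only [← Matrix.mulVec_mulVec]
  have hGu : Gi *ᵥ Δui + Hiᵀ *ᵥ Δxi + Δts • ψui
      + (Biᵀ *ᵥ (Ps *ᵥ xbi) - Biᵀ *ᵥ zs + lui) = 0 := by
    rw [eG, eH, hψui]
    linear_combination (norm := module) hF2 - hBls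
  -- control law
  have cancel : ∀ v : Fin nu → ℝ, Gi⁻¹ *ᵥ (Gi *ᵥ v) = v := by
    intro v
    rw [Matrix.mulVec_mulVec, hGinvG, Matrix.one_mulVec]
  have h2 : Gi *ᵥ (Ki *ᵥ Δxi + Δts • Ti + ki) = Gi *ᵥ Δui := by
    have exp1 : Gi *ᵥ (Ki *ᵥ Δxi) = -(Hiᵀ *ᵥ Δxi) := by
      rw [hKi, Matrix.mulVec_mulVec, Matrix.mul_neg, ← Matrix.mul_assoc, hGGinv,
        Matrix.one_mul, Matrix.neg_mulVec]
    have exp2 : Gi *ᵥ Ti = -ψui := by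
      rw [hTi, Matrix.mulVec_neg, Matrix.mulVec_mulVec, hGGinv, Matrix.one_mulVec]
    have exp3 : Gi *ᵥ ki = -(Biᵀ *ᵥ (Ps *ᵥ xbi) - Biᵀ *ᵥ zs + lui) := by
      rw [hki, Matrix.mulVec_neg, Matrix.mulVec_mulVec, hGGinv, Matrix.one_mulVec]
    rw [Matrix.mulVec_add, Matrix.mulVec_add, Matrix.mulVec_smul, exp1, exp2, exp3]
    linear_combination (norm := module) -hGu
  have hΔu : Δui = Ki *ᵥ Δxi + Δts • Ti + ki := by
    calc Δui = Gi⁻¹ *ᵥ (Gi *ᵥ Δui) := (cancel _).symm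
    _ = Gi⁻¹ *ᵥ (Gi *ᵥ (Ki *ᵥ Δxi + Δts • Ti + ki)) := by rw [h2]
    _ = Ki *ᵥ Δxi + Δts • Ti + ki := cancel _
  -- scalar switching condensation
  have d1 : fi ⬝ᵥ Δls = fi ⬝ᵥ (Ps *ᵥ Δxs) - fi ⬝ᵥ zs - Δts * (fi ⬝ᵥ Γs) := by
    rw [hcostate]
    simp only [dotProduct_sub, dotProduct_smul, smul_eq_mul]
  have d2 : fi ⬝ᵥ (Ps *ᵥ Δxs) = (Ps *ᵥ fi) ⬝ᵥ Δxs := hdotPs Δxs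
  have d3 : (Ps *ᵥ fi) ⬝ᵥ Δxs = (Ps *ᵥ fi) ⬝ᵥ (Ai *ᵥ Δxi) + (Ps *ᵥ fi) ⬝ᵥ (Bi *ᵥ Δui)
      + Δts * ((Ps *ᵥ fi) ⬝ᵥ fi) + (Ps *ᵥ fi) ⬝ᵥ xbi := by
    rw [hΔxs]
    simp only [dotProduct_add, dotProduct_smul, smul_eq_mul]
  have d4 : Γs ⬝ᵥ Δxs = Γs ⬝ᵥ (Ai *ᵥ Δxi) + Γs ⬝ᵥ (Bi *ᵥ Δui)
      + Δts * (Γs ⬝ᵥ fi) + Γs ⬝ᵥ xbi := by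
    rw [hΔxs]
    simp only [dotProduct_add, dotProduct_smul, smul_eq_mul]
  have d5 : (Ps *ᵥ fi) ⬝ᵥ (Ai *ᵥ Δxi) = (Aiᵀ *ᵥ (Ps *ᵥ fi)) ⬝ᵥ Δxi := hdotT Ai _ _
  have d6 : (Ps *ᵥ fi) ⬝ᵥ (Bi *ᵥ Δui) = (Biᵀ *ᵥ (Ps *ᵥ fi)) ⬝ᵥ Δui := hdotT Bi _ _
  have d7 : Γs ⬝ᵥ (Ai *ᵥ Δxi) = (Aiᵀ *ᵥ Γs) ⬝ᵥ Δxi := hdotT Ai _ _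
  have d8 : Γs ⬝ᵥ (Bi *ᵥ Δui) = (Biᵀ *ᵥ Γs) ⬝ᵥ Δui := hdotT Bi _ _
  have d9 : ψui ⬝ᵥ Δui = hui ⬝ᵥ Δui + (Biᵀ *ᵥ (Ps *ᵥ fi)) ⬝ᵥ Δui - (Biᵀ *ᵥ Γs) ⬝ᵥ Δui := by
    rw [hψui]
    simp only [add_dotProduct, sub_dotProduct]
  have d10 : ψui ⬝ᵥ Δui = ψui ⬝ᵥ (Ki *ᵥ Δxi) + Δts * (ψui ⬝ᵥ Ti) + ψui ⬝ᵥ ki := by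
    rw [hΔu]
    simp only [dotProduct_add, dotProduct_smul, smul_eq_mul]
  have d11 : ψui ⬝ᵥ (Ki *ᵥ Δxi) = (Kiᵀ *ᵥ ψui) ⬝ᵥ Δxi := hdotT Ki _ _
  have d12 : ψui ⬝ᵥ Ti = -(ψui ⬝ᵥ (Gi⁻¹ *ᵥ ψui)) := by
    rw [hTi, dotProduct_neg]
  have d13 : Γi ⬝ᵥ Δxi = ψxi ⬝ᵥ Δxi + (Kiᵀ *ᵥ ψui) ⬝ᵥ Δxi := by
    rw [hΓi, add_dotProduct]
  have d14 : ψxi ⬝ᵥ Δxi = hxi ⬝ᵥ Δxi + (Aiᵀ *ᵥ (Ps *ᵥ fi)) ⬝ᵥ Δxi - (Aiᵀ *ᵥ Γs) ⬝ᵥ Δxi := by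
    rw [hψxi]
    simp only [add_dotProduct, sub_dotProduct]
  have d15 : (Ps *ᵥ fi) ⬝ᵥ fi = fi ⬝ᵥ (Ps *ᵥ fi) := dotProduct_comm _ _
  have d16 : (Ps *ᵥ fi) ⬝ᵥ xbi = fi ⬝ᵥ (Ps *ᵥ xbi) := (hdotPs xbi).symm
  have d17 : fi ⬝ᵥ (Ps *ᵥ xbi - zs) = fi ⬝ᵥ (Ps *ᵥ xbi) - fi ⬝ᵥ zs := dotProduct_sub _ _ _
  have d18 : fi ⬝ᵥ Γs = Γs ⬝ᵥ fi := dotProduct_comm _ _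
  have hkey : Γi ⬝ᵥ Δxi + ξts * Δts + ηts = 0 := by
    rw [hξts, hηts]
    linear_combination hswitch - d1 - d2 - d3 + d4 - d5 - d6 + d7 + d8 + d9 - d10 - d11
      - Δts * d12 + d13 + d14 - Δts * d15 - d16 + d17 + Δts * d18
  have hΔts : Δts = -(ξts⁻¹ * (Γi ⬝ᵥ Δxi + ηts)) := by
    field_simp
    linarith [hkey]
  -- final assembly
  have eAls : Aiᵀ *ᵥ Δls = Aiᵀ *ᵥ (Ps *ᵥ (Ai *ᵥ Δxi)) + Aiᵀ *ᵥ (Ps *ᵥ (Bi *ᵥ Δui))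
      + Δts • (Aiᵀ *ᵥ (Ps *ᵥ fi)) + Aiᵀ *ᵥ (Ps *ᵥ xbi) - Aiᵀ *ᵥ zs - Δts • (Aiᵀ *ᵥ Γs) := by
    rw [hΔls]
    simp only [Matrix.mulVec_add, Matrix.mulVec_sub, Matrix.mulVec_smul]
  have eF : Fi *ᵥ Δxi = Qxxi *ᵥ Δxi + Aiᵀ *ᵥ (Ps *ᵥ (Ai *ᵥ Δxi)) := by
    rw [hFi, Matrix.add_mulVec]
    simp only [← Matrix.mulVec_mulVec]
  have eHu : Hi *ᵥ Δui = Qxui *ᵥ Δui + Aiᵀ *ᵥ (Ps *ᵥ (Bi *ᵥ Δui)) := by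
    rw [hHi, Matrix.add_mulVec]
    simp only [← Matrix.mulVec_mulVec]
  have M1 : Hi * Ki = -(Kiᵀ * Gi * Ki) := by
    rw [hKiT, hKi, Matrix.neg_mul, Matrix.neg_mul, Matrix.mul_neg, Matrix.mul_neg, neg_neg,
      Matrix.mul_assoc Hi Gi⁻¹ Gi, hGinvG, Matrix.mul_one]
  have M2 : Hi *ᵥ Ti = Kiᵀ *ᵥ ψui := by
    rw [hTi, hKiT, Matrix.mulVec_neg, Matrix.mulVec_mulVec, Matrix.neg_mulVec]
  have eHu2 : Hi *ᵥ Δui = -((Kiᵀ * Gi * Ki) *ᵥ Δxi) + Δts • (Kiᵀ *ᵥ ψui) + Hi *ᵥ ki := by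
    rw [hΔu]
    simp only [Matrix.mulVec_add, Matrix.mulVec_smul, Matrix.mulVec_mulVec, M1, M2,
      Matrix.neg_mulVec]
  have eΓ : Γi = ψxi + Kiᵀ *ᵥ ψui := hΓi
  have hsm : Δts • Γi = -(ξts⁻¹ * (Γi ⬝ᵥ Δxi + ηts)) • Γi := by rw [← hΔts]
  have ePx : Pi *ᵥ Δxi = Fi *ᵥ Δxi - (Kiᵀ * Gi * Ki) *ᵥ Δxi
      - (ξts⁻¹ * (Γi ⬝ᵥ Δxi)) • Γi := by
    rw [hPi, Matrix.sub_mulVec, Matrix.sub_mulVec, Matrix.smul_mulVec,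
      vecMulVec_mulVec', smul_smul]
  have ez : zi = Aiᵀ *ᵥ zs - Aiᵀ *ᵥ (Ps *ᵥ xbi) - lxi - Hi *ᵥ ki + (ξts⁻¹ * ηts) • Γi := by
    rw [hzi, Matrix.mulVec_sub]
  have hsm2 : Δts • hxi + Δts • (Aiᵀ *ᵥ (Ps *ᵥ fi)) - Δts • (Aiᵀ *ᵥ Γs)
      + Δts • (Kiᵀ *ᵥ ψui) = Δts • Γi := by
    rw [hΓi, hψxi]
    module
  rw [ePx, ez, eF]
  linear_combination (norm := module) -hF1 + eAls - eHu + eHu2 + hsm2 + hsm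
end

section
/- Assume G_s and G_i are invertible. Let S ⊆ ℝ^{n_x} × ℝ^{n_u} × ℝ × ℝ^{n_x} × ℝ^{n_u} × ℝ^{n_x} be the subspace of tuples w = (Δx_i, Δu_i, Δt, Δx_s, Δu_s, Δx') satisfying the homogeneous constraints A_i Δx_i + B_i Δu_i − Δx_s + f_i Δt = 0 and A_s Δx_s + B_s Δu_s − Δx' − f_s Δt = 0. If the quadratic form q(w) = Δx_iᵀ Q_{xx,i} Δx_i + 2 Δx_iᵀ Q_{xu,i} Δu_i + Δu_iᵀ Q_{uu,i} Δu_i + 2 Δt (h_{x,i}ᵀ Δx_i + h_{u,i}ᵀ Δu_i) − 2 Δt (h_{x,s}ᵀ Δx_s + h_{u,s}ᵀ Δu_s) + Δx_sᵀ Q_{xx,s} Δx_s + 2 Δx_sᵀ Q_{xu,s} Δu_s + Δu_sᵀ Q_{uu,s} Δu_s + Δx'ᵀ P' Δx' satisfies q(w) > 0 for every nonzero w ∈ S, then ξ̃_s > 0. (Positivity of the switching-time curvature under the second-order sufficient condition, Assumption 3.1.) -/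
open Matrix

section helpers
variable {m n k : Type*} [Fintype m] [Fintype n] [Fintype k]

lemma dp_sw (M : Matrix m n ℝ) (x : m → ℝ) (y : n → ℝ) :
    x ⬝ᵥ M *ᵥ y = y ⬝ᵥ Mᵀ *ᵥ x := by
  rw [Matrix.dotProduct_mulVec, ← Matrix.mulVec_transpose, dotProduct_comm]

lemma dp_pull' (A : Matrix m n ℝ) (x : n → ℝ) (z : m → ℝ) :
    (A *ᵥ x) ⬝ᵥ z = x ⬝ᵥ (Aᵀ *ᵥ z) := by
  rw [dotProduct_comm, dp_sw]

lemma dp_pull (A : Matrix m n ℝ) (M : Matrix m k ℝ) (x : n → ℝ) (y : k → ℝ) :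
    (A *ᵥ x) ⬝ᵥ (M *ᵥ y) = x ⬝ᵥ ((Aᵀ * M) *ᵥ y) := by
  rw [dp_pull', Matrix.mulVec_mulVec]

lemma quad_expand2 (M : Matrix n n ℝ) (hM : Mᵀ = M) (a b : n → ℝ) :
    (a + b) ⬝ᵥ M *ᵥ (a + b)
      = a ⬝ᵥ M *ᵥ a + 2 * (a ⬝ᵥ M *ᵥ b) + b ⬝ᵥ M *ᵥ b := by
  have hba : b ⬝ᵥ M *ᵥ a = a ⬝ᵥ M *ᵥ b := by rw [dp_sw, hM]
  simp only [Matrix.mulVec_add, dotProduct_add, add_dotProduct, hba]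
  ring

lemma quad_expand3 (M : Matrix n n ℝ) (hM : Mᵀ = M) (a b c : n → ℝ) :
    (a + b - c) ⬝ᵥ M *ᵥ (a + b - c)
      = a ⬝ᵥ M *ᵥ a + 2 * (a ⬝ᵥ M *ᵥ b) + b ⬝ᵥ M *ᵥ b
        - 2 * (a ⬝ᵥ M *ᵥ c) - 2 * (b ⬝ᵥ M *ᵥ c) + c ⬝ᵥ M *ᵥ c := by
  have hba : b ⬝ᵥ M *ᵥ a = a ⬝ᵥ M *ᵥ b := by rw [dp_sw, hM]
  have hca : c ⬝ᵥ M *ᵥ a = a ⬝ᵥ M *ᵥ c := by rw [dp_sw, hM]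
  have hcb : c ⬝ᵥ M *ᵥ b = b ⬝ᵥ M *ᵥ c := by rw [dp_sw, hM]
  simp only [Matrix.mulVec_add, Matrix.mulVec_sub, dotProduct_add, dotProduct_sub,
    add_dotProduct, sub_dotProduct, hba, hca, hcb]
  ring
end helpers

/-- Positivity of the switching-time curvature `ξ̃_s` under the second-order
sufficient condition (Assumption 3.1): if the quadratic form of the switch-stage
QP is positive on the nonzero elements of the subspace defined by the
homogeneous linearized dynamics, then `ξ̃_s > 0`. -/
theorem switching_time_curvature_pos {nx nu : ℕ}
    (Qxxs P' : Matrix (Fin nx) (Fin nx) ℝ)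
    (Quus : Matrix (Fin nu) (Fin nu) ℝ)
    (Qxus : Matrix (Fin nx) (Fin nu) ℝ)
    (As : Matrix (Fin nx) (Fin nx) ℝ) (Bs : Matrix (Fin nx) (Fin nu) ℝ)
    (hxs fs : Fin nx → ℝ) (hus : Fin nu → ℝ)
    (Qxxi : Matrix (Fin nx) (Fin nx) ℝ)
    (Quui : Matrix (Fin nu) (Fin nu) ℝ)
    (Qxui : Matrix (Fin nx) (Fin nu) ℝ)
    (Ai : Matrix (Fin nx) (Fin nx) ℝ) (Bi : Matrix (Fin nx) (Fin nu) ℝ)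
    (hxi fi : Fin nx → ℝ) (hui : Fin nu → ℝ)
    (hQxxsSymm : Qxxs.IsSymm) (hQuusSymm : Quus.IsSymm) (hP'Symm : P'.IsSymm)
    (hQxxiSymm : Qxxi.IsSymm) (hQuuiSymm : Quui.IsSymm)
    (Fs : Matrix (Fin nx) (Fin nx) ℝ) (hFs : Fs = Qxxs + Asᵀ * P' * As)
    (Hs : Matrix (Fin nx) (Fin nu) ℝ) (hHs : Hs = Qxus + Asᵀ * P' * Bs)
    (Gs : Matrix (Fin nu) (Fin nu) ℝ) (hGs : Gs = Quus + Bsᵀ * P' * Bs)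
    (hGsinv : IsUnit Gs)
    (Ks : Matrix (Fin nu) (Fin nx) ℝ) (hKs : Ks = -(Gs⁻¹ * Hsᵀ))
    (Ps : Matrix (Fin nx) (Fin nx) ℝ) (hPs : Ps = Fs - Ksᵀ * Gs * Ks)
    (ψxs : Fin nx → ℝ) (hψxs : ψxs = hxs + Asᵀ *ᵥ (P' *ᵥ fs))
    (ψus : Fin nu → ℝ) (hψus : ψus = hus + Bsᵀ *ᵥ (P' *ᵥ fs))
    (Γs : Fin nx → ℝ) (hΓs : Γs = ψxs + Ksᵀ *ᵥ ψus)
    (ξs : ℝ) (hξs : ξs = fs ⬝ᵥ (P' *ᵥ fs) - ψus ⬝ᵥ (Gs⁻¹ *ᵥ ψus))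
    (Gi : Matrix (Fin nu) (Fin nu) ℝ) (hGi : Gi = Quui + Biᵀ * Ps * Bi)
    (hGiinv : IsUnit Gi)
    (Ki : Matrix (Fin nu) (Fin nx) ℝ) (hKi : Ki = -(Gi⁻¹ * (Qxui + Aiᵀ * Ps * Bi)ᵀ))
    (ψui : Fin nu → ℝ) (hψui : ψui = hui + Biᵀ *ᵥ (Ps *ᵥ fi) - Biᵀ *ᵥ Γs)
    (ξts : ℝ) (hξts : ξts = ξs - 2 * (Γs ⬝ᵥ fi) + fi ⬝ᵥ (Ps *ᵥ fi) - ψui ⬝ᵥ (Gi⁻¹ *ᵥ ψui))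
    (hSOSC : ∀ (dxi : Fin nx → ℝ) (dui : Fin nu → ℝ) (dt : ℝ)
        (dxs : Fin nx → ℝ) (dus : Fin nu → ℝ) (dx' : Fin nx → ℝ),
      Ai *ᵥ dxi + Bi *ᵥ dui - dxs + dt • fi = 0 →
      As *ᵥ dxs + Bs *ᵥ dus - dx' - dt • fs = 0 →
      ¬(dxi = 0 ∧ dui = 0 ∧ dt = 0 ∧ dxs = 0 ∧ dus = 0 ∧ dx' = 0) →
      0 < dxi ⬝ᵥ (Qxxi *ᵥ dxi) + 2 * (dxi ⬝ᵥ (Qxui *ᵥ dui)) + dui ⬝ᵥ (Quui *ᵥ dui)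
        + 2 * dt * (hxi ⬝ᵥ dxi + hui ⬝ᵥ dui) - 2 * dt * (hxs ⬝ᵥ dxs + hus ⬝ᵥ dus)
        + dxs ⬝ᵥ (Qxxs *ᵥ dxs) + 2 * (dxs ⬝ᵥ (Qxus *ᵥ dus)) + dus ⬝ᵥ (Quus *ᵥ dus)
        + dx' ⬝ᵥ (P' *ᵥ dx')) :
    0 < ξts := by
  -- invertibility facts
  have hdetGs : IsUnit Gs.det := (Matrix.isUnit_iff_isUnit_det Gs).mp hGsinv
  have hdetGi : IsUnit Gi.det := (Matrix.isUnit_iff_isUnit_det Gi).mp hGiinv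
  have hGsmul : Gs * Gs⁻¹ = 1 := Matrix.mul_nonsing_inv Gs hdetGs
  have hGimul : Gi * Gi⁻¹ = 1 := Matrix.mul_nonsing_inv Gi hdetGi
  -- symmetry facts
  have hGsT : Gsᵀ = Gs := by
    rw [hGs]
    simp [Matrix.transpose_add, Matrix.transpose_mul, Matrix.transpose_transpose,
      hQuusSymm.eq, hP'Symm.eq, Matrix.mul_assoc]
  have hGsiT : Gs⁻¹ᵀ = Gs⁻¹ := by rw [Matrix.transpose_nonsing_inv, hGsT]
  have hFsT : Fsᵀ = Fs := by
    rw [hFs]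
    simp [Matrix.transpose_add, Matrix.transpose_mul, Matrix.transpose_transpose,
      hQxxsSymm.eq, hP'Symm.eq, Matrix.mul_assoc]
  have hPsT : Psᵀ = Ps := by
    rw [hPs]
    simp [Matrix.transpose_sub, Matrix.transpose_mul, Matrix.transpose_transpose,
      hGsT, hFsT, Matrix.mul_assoc]
  have hGiT : Giᵀ = Gi := by
    rw [hGi]
    simp [Matrix.transpose_add, Matrix.transpose_mul, Matrix.transpose_transpose,
      hQuuiSymm.eq, hPsT, Matrix.mul_assoc]
  -- matrix identities
  have mGsKs : Gs * Ks = -Hsᵀ := by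
    rw [hKs, Matrix.mul_neg, ← Matrix.mul_assoc, hGsmul, Matrix.one_mul]
  have mKsT : Ksᵀ = -(Hs * Gs⁻¹) := by
    rw [hKs]
    simp [Matrix.transpose_neg, Matrix.transpose_mul, Matrix.transpose_transpose, hGsiT]
  have mKGK : Ksᵀ * Gs * Ks = -(Hs * Ks) := by
    rw [Matrix.mul_assoc, mGsKs, mKsT, hKs]
    simp [Matrix.mul_neg, Matrix.neg_mul, Matrix.mul_assoc]
  have mPs2 : Ps = Fs + Hs * Ks := by
    rw [hPs, mKGK, sub_neg_eq_add]
  -- auxiliary vectors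
  obtain ⟨us0, hus0⟩ : ∃ v, v = Gs⁻¹ *ᵥ ψus := ⟨_, rfl⟩
  obtain ⟨ui0, hui0⟩ : ∃ v, v = Gi⁻¹ *ᵥ ψui := ⟨_, rfl⟩
  have vGsus0 : Gs *ᵥ us0 = ψus := by
    rw [hus0, Matrix.mulVec_mulVec, hGsmul, Matrix.one_mulVec]
  have vGiui0 : Gi *ᵥ ui0 = ψui := by
    rw [hui0, Matrix.mulVec_mulVec, hGimul, Matrix.one_mulVec]
  have vKsψ : Ksᵀ *ᵥ ψus = -(Hs *ᵥ us0) := by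
    rw [mKsT, hus0, Matrix.neg_mulVec, ← Matrix.mulVec_mulVec]
  -- the witness
  obtain ⟨dui, hdui⟩ : ∃ v, v = -ui0 := ⟨_, rfl⟩
  obtain ⟨dxs, hdxs⟩ : ∃ v, v = Bi *ᵥ dui + fi := ⟨_, rfl⟩
  obtain ⟨dus, hdus⟩ : ∃ v, v = Ks *ᵥ dxs + us0 := ⟨_, rfl⟩
  obtain ⟨dx', hdx'⟩ : ∃ v, v = As *ᵥ dxs + Bs *ᵥ dus - fs := ⟨_, rfl⟩
  have hc1 : Ai *ᵥ (0 : Fin nx → ℝ) + Bi *ᵥ dui - dxs + (1:ℝ) • fi = 0 := by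
    rw [hdxs]; simp [Matrix.mulVec_zero]
  have hc2 : As *ᵥ dxs + Bs *ᵥ dus - dx' - (1:ℝ) • fs = 0 := by
    rw [hdx']; simp
  have hne : ¬((0 : Fin nx → ℝ) = 0 ∧ dui = 0 ∧ (1:ℝ) = 0 ∧ dxs = 0 ∧ dus = 0 ∧ dx' = 0) := by
    rintro ⟨-, -, h, -⟩; exact one_ne_zero h
  have hQ := hSOSC 0 dui 1 dxs dus dx' hc1 hc2 hne
  simp only [Matrix.mulVec_zero, dotProduct_zero, zero_dotProduct,
    dotProduct_zero, zero_dotProduct, mul_zero, zero_add, add_zero, mul_one] at hQ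
  -- stage-s expansion
  have e1 : dx' ⬝ᵥ (P' *ᵥ dx')
      = (As *ᵥ dxs) ⬝ᵥ P' *ᵥ (As *ᵥ dxs) + 2 * ((As *ᵥ dxs) ⬝ᵥ P' *ᵥ (Bs *ᵥ dus))
        + (Bs *ᵥ dus) ⬝ᵥ P' *ᵥ (Bs *ᵥ dus) - 2 * ((As *ᵥ dxs) ⬝ᵥ P' *ᵥ fs)
        - 2 * ((Bs *ᵥ dus) ⬝ᵥ P' *ᵥ fs) + fs ⬝ᵥ P' *ᵥ fs := by
    rw [hdx']; exact quad_expand3 P' hP'Symm.eq _ _ _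
  have e2 : (As *ᵥ dxs) ⬝ᵥ P' *ᵥ (As *ᵥ dxs) = dxs ⬝ᵥ ((Asᵀ * P' * As) *ᵥ dxs) := by
    rw [dp_pull, Matrix.mulVec_mulVec]
  have e3 : (As *ᵥ dxs) ⬝ᵥ P' *ᵥ (Bs *ᵥ dus) = dxs ⬝ᵥ ((Asᵀ * P' * Bs) *ᵥ dus) := by
    rw [dp_pull, Matrix.mulVec_mulVec]
  have e4 : (Bs *ᵥ dus) ⬝ᵥ P' *ᵥ (Bs *ᵥ dus) = dus ⬝ᵥ ((Bsᵀ * P' * Bs) *ᵥ dus) := by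
    rw [dp_pull, Matrix.mulVec_mulVec]
  have e5 : (As *ᵥ dxs) ⬝ᵥ P' *ᵥ fs = dxs ⬝ᵥ (Asᵀ *ᵥ (P' *ᵥ fs)) :=
    dp_pull' As dxs (P' *ᵥ fs)
  have e6 : (Bs *ᵥ dus) ⬝ᵥ P' *ᵥ fs = dus ⬝ᵥ (Bsᵀ *ᵥ (P' *ᵥ fs)) :=
    dp_pull' Bs dus (P' *ᵥ fs)
  have e7 : dxs ⬝ᵥ ((Asᵀ * P' * As) *ᵥ dxs) + dxs ⬝ᵥ (Qxxs *ᵥ dxs) = dxs ⬝ᵥ (Fs *ᵥ dxs) := by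
    rw [hFs, Matrix.add_mulVec, dotProduct_add]; ring
  have e8 : dxs ⬝ᵥ ((Asᵀ * P' * Bs) *ᵥ dus) + dxs ⬝ᵥ (Qxus *ᵥ dus) = dxs ⬝ᵥ (Hs *ᵥ dus) := by
    rw [hHs, Matrix.add_mulVec, dotProduct_add]; ring
  have e9 : dus ⬝ᵥ ((Bsᵀ * P' * Bs) *ᵥ dus) + dus ⬝ᵥ (Quus *ᵥ dus) = dus ⬝ᵥ (Gs *ᵥ dus) := by
    rw [hGs, Matrix.add_mulVec, dotProduct_add]; ring
  have e10 : hxs ⬝ᵥ dxs + dxs ⬝ᵥ (Asᵀ *ᵥ (P' *ᵥ fs)) = ψxs ⬝ᵥ dxs := by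
    rw [hψxs, add_dotProduct, dotProduct_comm dxs]
  have e11 : hus ⬝ᵥ dus + dus ⬝ᵥ (Bsᵀ *ᵥ (P' *ᵥ fs)) = ψus ⬝ᵥ dus := by
    rw [hψus, add_dotProduct, dotProduct_comm dus]
  have e12 : dxs ⬝ᵥ (Hs *ᵥ dus) = dxs ⬝ᵥ (Hs *ᵥ (Ks *ᵥ dxs)) + dxs ⬝ᵥ (Hs *ᵥ us0) := by
    rw [hdus, Matrix.mulVec_add, dotProduct_add]
  have e13 : dus ⬝ᵥ (Gs *ᵥ dus)
      = (Ks *ᵥ dxs) ⬝ᵥ Gs *ᵥ (Ks *ᵥ dxs) + 2 * ((Ks *ᵥ dxs) ⬝ᵥ Gs *ᵥ us0)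
        + us0 ⬝ᵥ Gs *ᵥ us0 := by
    rw [hdus]; exact quad_expand2 Gs hGsT _ _
  have e14 : (Ks *ᵥ dxs) ⬝ᵥ Gs *ᵥ (Ks *ᵥ dxs) = -(dxs ⬝ᵥ (Hs *ᵥ (Ks *ᵥ dxs))) := by
    rw [dp_pull, Matrix.mulVec_mulVec, mKGK, Matrix.neg_mulVec, dotProduct_neg,
      ← Matrix.mulVec_mulVec]
  have e15 : (Ks *ᵥ dxs) ⬝ᵥ Gs *ᵥ us0 = ψus ⬝ᵥ (Ks *ᵥ dxs) := by
    rw [vGsus0, dotProduct_comm]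
  have e16 : us0 ⬝ᵥ Gs *ᵥ us0 = ψus ⬝ᵥ (Gs⁻¹ *ᵥ ψus) := by
    rw [vGsus0, dotProduct_comm, hus0]
  have e17 : ψus ⬝ᵥ dus = ψus ⬝ᵥ (Ks *ᵥ dxs) + ψus ⬝ᵥ us0 := by
    rw [hdus, dotProduct_add]
  have e18 : ψus ⬝ᵥ us0 = ψus ⬝ᵥ (Gs⁻¹ *ᵥ ψus) := by rw [hus0]
  have e19 : Γs ⬝ᵥ dxs = ψxs ⬝ᵥ dxs + (Ksᵀ *ᵥ ψus) ⬝ᵥ dxs := by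
    rw [hΓs, add_dotProduct]
  have e20 : (Ksᵀ *ᵥ ψus) ⬝ᵥ dxs = -(dxs ⬝ᵥ (Hs *ᵥ us0)) := by
    rw [vKsψ, neg_dotProduct, dotProduct_comm]
  have e21 : dxs ⬝ᵥ (Ps *ᵥ dxs)
      = dxs ⬝ᵥ (Fs *ᵥ dxs) + dxs ⬝ᵥ (Hs *ᵥ (Ks *ᵥ dxs)) := by
    rw [mPs2, Matrix.add_mulVec, dotProduct_add, ← Matrix.mulVec_mulVec]
  have hA : dxs ⬝ᵥ (Qxxs *ᵥ dxs) + 2 * (dxs ⬝ᵥ (Qxus *ᵥ dus)) + dus ⬝ᵥ (Quus *ᵥ dus)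
      + dx' ⬝ᵥ (P' *ᵥ dx') - 2 * (hxs ⬝ᵥ dxs + hus ⬝ᵥ dus)
      = dxs ⬝ᵥ (Ps *ᵥ dxs) - 2 * (Γs ⬝ᵥ dxs) + ξs := by
    rw [hξs]
    linarith [e1, e2, e3, e4, e5, e6, e7, e8, e9, e10, e11, e12, e13, e14, e15, e16,
      e17, e18, e19, e20, e21]
  -- stage-i expansion
  have b1 : dxs ⬝ᵥ (Ps *ᵥ dxs)
      = (Bi *ᵥ dui) ⬝ᵥ Ps *ᵥ (Bi *ᵥ dui) + 2 * ((Bi *ᵥ dui) ⬝ᵥ Ps *ᵥ fi)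
        + fi ⬝ᵥ Ps *ᵥ fi := by
    rw [hdxs]; exact quad_expand2 Ps hPsT _ _
  have b2 : (Bi *ᵥ dui) ⬝ᵥ Ps *ᵥ (Bi *ᵥ dui) = dui ⬝ᵥ ((Biᵀ * Ps * Bi) *ᵥ dui) := by
    rw [dp_pull, Matrix.mulVec_mulVec]
  have b3 : dui ⬝ᵥ ((Biᵀ * Ps * Bi) *ᵥ dui) + dui ⬝ᵥ (Quui *ᵥ dui) = dui ⬝ᵥ (Gi *ᵥ dui) := by
    rw [hGi, Matrix.add_mulVec, dotProduct_add]; ring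
  have b4 : dui ⬝ᵥ (Gi *ᵥ dui) = ψui ⬝ᵥ (Gi⁻¹ *ᵥ ψui) := by
    rw [hdui, Matrix.mulVec_neg, dotProduct_neg, neg_dotProduct, neg_neg, vGiui0,
      dotProduct_comm, hui0]
  have b5 : (Bi *ᵥ dui) ⬝ᵥ Ps *ᵥ fi = dui ⬝ᵥ (Biᵀ *ᵥ (Ps *ᵥ fi)) :=
    dp_pull' Bi dui (Ps *ᵥ fi)
  have b6 : hui ⬝ᵥ dui = dui ⬝ᵥ hui := dotProduct_comm _ _
  have b7 : Γs ⬝ᵥ dxs = Γs ⬝ᵥ (Bi *ᵥ dui) + Γs ⬝ᵥ fi := by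
    rw [hdxs, dotProduct_add]
  have b8 : Γs ⬝ᵥ (Bi *ᵥ dui) = dui ⬝ᵥ (Biᵀ *ᵥ Γs) := dp_sw Bi Γs dui
  have b9 : dui ⬝ᵥ ψui = dui ⬝ᵥ hui + dui ⬝ᵥ (Biᵀ *ᵥ (Ps *ᵥ fi)) - dui ⬝ᵥ (Biᵀ *ᵥ Γs) := by
    rw [hψui, dotProduct_sub, dotProduct_add]
  have b10 : dui ⬝ᵥ ψui = -(ψui ⬝ᵥ (Gi⁻¹ *ᵥ ψui)) := by
    rw [hdui, neg_dotProduct, dotProduct_comm, hui0]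
  have hB : dui ⬝ᵥ (Quui *ᵥ dui) + 2 * (hui ⬝ᵥ dui)
      + (dxs ⬝ᵥ (Ps *ᵥ dxs) - 2 * (Γs ⬝ᵥ dxs) + ξs) = ξts := by
    rw [hξts]
    linarith [b1, b2, b3, b4, b5, b6, b7, b8, b9, b10]
  linarith [hQ, hA, hB]
end

section
/- Assume G_s and G_i are invertible. Let S ⊆ ℝ^{n_x} × ℝ^{n_u} × ℝ × ℝ^{n_x} × ℝ^{n_u} × ℝ^{n_x} be the subspace of tuples w = (Δx_i, Δu_i, Δt, Δx_s, Δu_s, Δx') satisfying the homogeneous constraints A_i Δx_i + B_i Δu_i − Δx_s + f_i Δt = 0 and A_s Δx_s + B_s Δu_s − Δx' − f_s Δt = 0. If the quadratic form q(w) = Δx_iᵀ Q_{xx,i} Δx_i + 2 Δx_iᵀ Q_{xu,i} Δu_i + Δu_iᵀ Q_{uu,i} Δu_i + 2 Δt (h_{x,i}ᵀ Δx_i + h_{u,i}ᵀ Δu_i) − 2 Δt (h_{x,s}ᵀ Δx_s + h_{u,s}ᵀ Δu_s) + Δx_sᵀ Q_{xx,s} Δx_s + 2 Δx_sᵀ Q_{xu,s}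 Δu_s + Δu_sᵀ Q_{uu,s} Δu_s + Δx'ᵀ P' Δx' satisfies q(w) > 0 for every nonzero w ∈ S, then the symmetric (n_x+1)×(n_x+1) block matrix [[F_i − K_iᵀ G_i K_i, Γ_i], [Γ_iᵀ, ξ̃_s]] is positive definite. (Positive definiteness of the reduced quadratic form in (Δx_i, Δt) obtained by eliminating the other variables via the Riccati recursion.) -/
/-!
Given `(Δx_i, Δt) ≠ 0`, choose `Δu_i` and `Δu_s` by the Riccati feedback laws and `Δx_s`, `Δx'`
by the dynamics. This gives a nonzero point of `S`, and along it `q` collapses stage by stage,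
backwards in time: the stage cost plus the quadratic cost-to-go of the next state, with the control
on its feedback law, is again a quadratic cost-to-go, whose data are those of the Riccati
recursion. At the first stage this is the form of the block matrix, which is therefore positive.
-/

open Matrix

variable {R : Type*} [CommRing R] {m n : Type*} [Fintype n]

def costToGo (P : Matrix n n R) (γ : n → R) (ξ : R) (x : n → R) (t : R) : R :=
  x ⬝ᵥ (P *ᵥ x) + 2 * t * (γ ⬝ᵥ x) + t ^ 2 * ξ

theorem costToGo_neg_time (P : Matrix n n R) (γ : n → R) (ξ : R) (x : n → R) (t : R) :
    costToGo P γ ξ x (-t) = costToGo P (-γ) ξ x t := by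
  simp only [costToGo, neg_dotProduct]
  ring

theorem Matrix.IsSymm.dotProduct_mulVec_comm {P : Matrix n n R} (hP : P.IsSymm) (v w : n → R) :
    v ⬝ᵥ (P *ᵥ w) = w ⬝ᵥ (P *ᵥ v) := by
  rw [dotProduct_mulVec, ← mulVec_transpose, hP.eq, dotProduct_comm]

theorem Matrix.IsSymm.transpose_mul_mul {P : Matrix n n R} (hP : P.IsSymm) (A : Matrix n m R) :
    (Aᵀ * P * A).IsSymm := by
  rw [IsSymm, transpose_mul, transpose_mul, transpose_transpose, hP.eq, Matrix.mul_assoc]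

variable [Fintype m]

theorem Matrix.transpose_mulVec_dotProduct (A : Matrix n m R) (x : m → R) (y : n → R) :
    (Aᵀ *ᵥ y) ⬝ᵥ x = y ⬝ᵥ (A *ᵥ x) := by
  rw [dotProduct_comm, dotProduct_transpose_mulVec]

def stageCost (Qxx : Matrix n n R) (Qxu : Matrix n m R) (Quu : Matrix m m R)
    (hx : n → R) (hu : m → R) (x : n → R) (u : m → R) (t : R) : R :=
  x ⬝ᵥ (Qxx *ᵥ x) + 2 * (x ⬝ᵥ (Qxu *ᵥ u)) + u ⬝ᵥ (Quu *ᵥ u) + 2 * t * (hx ⬝ᵥ x + hu ⬝ᵥ u)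

theorem stageCost_add_costToGo {P : Matrix n n R} (hP : P.IsSymm)
    (Qxx : Matrix n n R) (Qxu : Matrix n m R) (Quu : Matrix m m R) (A : Matrix n n R)
    (B : Matrix n m R) (hx f γ : n → R) (hu : m → R) (ξ : R) (x : n → R) (u : m → R) (t : R) :
    stageCost Qxx Qxu Quu hx hu x u t + costToGo P γ ξ (A *ᵥ x + B *ᵥ u + t • f) t
      = stageCost (Qxx + Aᵀ * P * A) (Qxu + Aᵀ * P * B) (Quu + Bᵀ * P * B)
          (hx + Aᵀ *ᵥ (P *ᵥ f) + Aᵀ *ᵥ γ) (hu + Bᵀ *ᵥ (P *ᵥ f) + Bᵀ *ᵥ γ) x u t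
        + t ^ 2 * (f ⬝ᵥ (P *ᵥ f) + 2 * (γ ⬝ᵥ f) + ξ) := by
  simp only [stageCost, costToGo, add_mulVec, mulVec_add, mulVec_smul, ← mulVec_mulVec,
    dotProduct_add, add_dotProduct, dotProduct_smul, smul_dotProduct, smul_eq_mul,
    dotProduct_transpose_mulVec, transpose_mulVec_dotProduct]
  linear_combination t * hP.dotProduct_mulVec_comm f (A *ᵥ x)
    + 2 * t * dotProduct_comm (A *ᵥ x) (P *ᵥ f) + t * hP.dotProduct_mulVec_comm f (B *ᵥ u)
    + 2 * t * dotProduct_comm (B *ᵥ u) (P *ᵥ f) + dotProduct_comm (A *ᵥ x) (P *ᵥ (A *ᵥ x))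
    + hP.dotProduct_mulVec_comm (B *ᵥ u) (A *ᵥ x) + 2 * dotProduct_comm (A *ᵥ x) (P *ᵥ (B *ᵥ u))
    + dotProduct_comm (B *ᵥ u) (P *ᵥ (B *ᵥ u))

/-- Completing the square in `u`: `G K = -Hᵀ` and `G w = -ψu` are the stationarity conditions. -/
theorem stageCost_feedback {G : Matrix m m R} (hG : G.IsSymm) (F : Matrix n n R)
    (H : Matrix n m R) {K : Matrix m n R} (hK : G * K = -Hᵀ) (ψx : n → R) {ψu w : m → R}
    (hw : G *ᵥ w = -ψu) (x : n → R) (t : R) :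
    stageCost F H G ψx ψu x (K *ᵥ x + t • w) t
      = costToGo (F - Kᵀ * G * K) (ψx + Kᵀ *ᵥ ψu) (ψu ⬝ᵥ w) x t := by
  have hGK : G *ᵥ (K *ᵥ x) = -(Hᵀ *ᵥ x) := by rw [mulVec_mulVec, hK, neg_mulVec]
  have hHw : x ⬝ᵥ (H *ᵥ w) = ψu ⬝ᵥ (K *ᵥ x) := by
    rw [← transpose_mulVec_dotProduct, ← neg_neg (Hᵀ *ᵥ x), ← hGK, neg_dotProduct,
      dotProduct_comm, hG.dotProduct_mulVec_comm, hw, dotProduct_neg, neg_neg, dotProduct_comm]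
  simp only [stageCost, costToGo, sub_mulVec, ← mulVec_mulVec, mulVec_add, mulVec_smul, hGK, hw,
    dotProduct_add, add_dotProduct, dotProduct_smul, smul_dotProduct, smul_eq_mul, dotProduct_sub,
    dotProduct_neg, neg_dotProduct, dotProduct_transpose_mulVec, transpose_mulVec_dotProduct]
  linear_combination t * hHw + t * dotProduct_comm ψu (K *ᵥ x) + t ^ 2 * dotProduct_comm ψu w

theorem stageCost_add_costToGo_riccati [DecidableEq m] {P : Matrix n n R} (hP : P.IsSymm)
    (Qxx : Matrix n n R) (Qxu : Matrix n m R) {Quu : Matrix m m R} (hQuu : Quu.IsSymm)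
    (A : Matrix n n R) (B : Matrix n m R) (hx f γ : n → R) (hu : m → R) (ξ : R)
    {G : Matrix m m R} (hG : G = Quu + Bᵀ * P * B) (hGu : IsUnit G)
    {H : Matrix n m R} (hH : H = Qxu + Aᵀ * P * B) {K : Matrix m n R} (hK : K = -(G⁻¹ * Hᵀ))
    {ψx : n → R} (hψx : ψx = hx + Aᵀ *ᵥ (P *ᵥ f) + Aᵀ *ᵥ γ)
    {ψu : m → R} (hψu : ψu = hu + Bᵀ *ᵥ (P *ᵥ f) + Bᵀ *ᵥ γ) (x : n → R) (t : R) :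
    stageCost Qxx Qxu Quu hx hu x (K *ᵥ x - t • (G⁻¹ *ᵥ ψu)) t
        + costToGo P γ ξ (A *ᵥ x + B *ᵥ (K *ᵥ x - t • (G⁻¹ *ᵥ ψu)) + t • f) t
      = costToGo (Qxx + Aᵀ * P * A - Kᵀ * G * K) (ψx + Kᵀ *ᵥ ψu)
          (f ⬝ᵥ (P *ᵥ f) + 2 * (γ ⬝ᵥ f) + ξ - ψu ⬝ᵥ (G⁻¹ *ᵥ ψu)) x t := by
  have hdet : IsUnit G.det := (isUnit_iff_isUnit_det G).mp hGu
  have hGK : G * K = -Hᵀ := by rw [hK, Matrix.mul_neg, mul_nonsing_inv_cancel_left _ _ hdet]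
  have hGw : G *ᵥ -(G⁻¹ *ᵥ ψu) = -ψu := by
    rw [mulVec_neg, mulVec_mulVec, mul_nonsing_inv _ hdet, one_mulVec]
  have hGsymm : G.IsSymm := hG ▸ hQuu.add (hP.transpose_mul_mul B)
  rw [sub_eq_add_neg _ (t • _), ← smul_neg, stageCost_add_costToGo hP, ← hG, ← hH, ← hψx, ← hψu,
    stageCost_feedback hGsymm _ _ hGK _ hGw]
  simp only [costToGo, dotProduct_neg]
  ring

theorem sumElim_dotProduct_fromBlocks_mulVec (M : Matrix n n R) (γ : n → R) (ξ : R)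
    (x : n → R) (t : R) :
    Sum.elim x (fun _ => t) ⬝ᵥ
        (fromBlocks M (replicateCol (Fin 1) γ) (replicateRow (Fin 1) γ) !![ξ] *ᵥ
          Sum.elim x (fun _ => t))
      = costToGo M γ ξ x t := by
  have hcol : replicateCol (Fin 1) γ *ᵥ (fun _ => t) = t • γ := by
    ext; simp [mulVec, dotProduct, mul_comm]
  rw [fromBlocks_mulVec, Sum.elim_comp_inl, Sum.elim_comp_inr, sumElim_dotProduct_sumElim,
    replicateRow_mulVec_eq_const, hcol]
  simp [costToGo, dotProduct_comm x γ, vecHead]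
  ring

theorem posDef_fromBlocks_of_costToGo_pos [PartialOrder R] [StarRing R] [TrivialStar R]
    {M : Matrix n n R} (hM : M.IsSymm) (γ : n → R) (ξ : R)
    (hpos : ∀ x t, ¬(x = 0 ∧ t = 0) → 0 < costToGo M γ ξ x t) :
    (fromBlocks M (replicateCol (Fin 1) γ) (replicateRow (Fin 1) γ) !![ξ]).PosDef := by
  refine posDef_iff_dotProduct_mulVec.mpr ⟨?_, fun v hv => ?_⟩
  · rw [isHermitian_iff_isSymm]
    exact hM.fromBlocks (transpose_replicateCol γ) (by ext i j; fin_cases i; fin_cases j; rfl)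
  · obtain ⟨x, t, rfl⟩ : ∃ x t, v = Sum.elim x fun _ => t :=
      ⟨v ∘ Sum.inl, v (Sum.inr 0), by ext (i | i) <;> simp [Fin.fin_one_eq_zero]⟩
    rw [star_trivial, sumElim_dotProduct_fromBlocks_mulVec]
    refine hpos x t fun ⟨hx, ht⟩ => hv ?_
    ext (i | i) <;> simp [hx, ht]

/-- Positive definiteness of the reduced quadratic form in `(Δx_i, Δt)` obtained
by eliminating the other variables via the Riccati recursion: under the
second-order sufficient condition (Assumption 3.1), the block matrix
`[[F_i − K_iᵀ G_i K_i, Γ_i], [Γ_iᵀ, ξ̃_s]]` is positive definite. -/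
theorem reduced_hessian_posdef {nx nu : ℕ}
    (Qxxs P' : Matrix (Fin nx) (Fin nx) ℝ)
    (Quus : Matrix (Fin nu) (Fin nu) ℝ)
    (Qxus : Matrix (Fin nx) (Fin nu) ℝ)
    (As : Matrix (Fin nx) (Fin nx) ℝ) (Bs : Matrix (Fin nx) (Fin nu) ℝ)
    (hxs fs : Fin nx → ℝ) (hus : Fin nu → ℝ)
    (Qxxi : Matrix (Fin nx) (Fin nx) ℝ)
    (Quui : Matrix (Fin nu) (Fin nu) ℝ)
    (Qxui : Matrix (Fin nx) (Fin nu) ℝ)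
    (Ai : Matrix (Fin nx) (Fin nx) ℝ) (Bi : Matrix (Fin nx) (Fin nu) ℝ)
    (hxi fi : Fin nx → ℝ) (hui : Fin nu → ℝ)
    (hQxxsSymm : Qxxs.IsSymm) (hQuusSymm : Quus.IsSymm) (hP'Symm : P'.IsSymm)
    (hQxxiSymm : Qxxi.IsSymm) (hQuuiSymm : Quui.IsSymm)
    (Fs : Matrix (Fin nx) (Fin nx) ℝ) (hFs : Fs = Qxxs + Asᵀ * P' * As)
    (Hs : Matrix (Fin nx) (Fin nu) ℝ) (hHs : Hs = Qxus + Asᵀ * P' * Bs)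
    (Gs : Matrix (Fin nu) (Fin nu) ℝ) (hGs : Gs = Quus + Bsᵀ * P' * Bs)
    (hGsinv : IsUnit Gs)
    (Ks : Matrix (Fin nu) (Fin nx) ℝ) (hKs : Ks = -(Gs⁻¹ * Hsᵀ))
    (Ps : Matrix (Fin nx) (Fin nx) ℝ) (hPs : Ps = Fs - Ksᵀ * Gs * Ks)
    (ψxs : Fin nx → ℝ) (hψxs : ψxs = hxs + Asᵀ *ᵥ (P' *ᵥ fs))
    (ψus : Fin nu → ℝ) (hψus : ψus = hus + Bsᵀ *ᵥ (P' *ᵥ fs))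
    (Γs : Fin nx → ℝ) (hΓs : Γs = ψxs + Ksᵀ *ᵥ ψus)
    (ξs : ℝ) (hξs : ξs = fs ⬝ᵥ (P' *ᵥ fs) - ψus ⬝ᵥ (Gs⁻¹ *ᵥ ψus))
    (Fi : Matrix (Fin nx) (Fin nx) ℝ) (hFi : Fi = Qxxi + Aiᵀ * Ps * Ai)
    (Gi : Matrix (Fin nu) (Fin nu) ℝ) (hGi : Gi = Quui + Biᵀ * Ps * Bi)
    (hGiinv : IsUnit Gi)
    (Ki : Matrix (Fin nu) (Fin nx) ℝ) (hKi : Ki = -(Gi⁻¹ * (Qxui + Aiᵀ * Ps * Bi)ᵀ))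
    (ψxi : Fin nx → ℝ) (hψxi : ψxi = hxi + Aiᵀ *ᵥ (Ps *ᵥ fi) - Aiᵀ *ᵥ Γs)
    (ψui : Fin nu → ℝ) (hψui : ψui = hui + Biᵀ *ᵥ (Ps *ᵥ fi) - Biᵀ *ᵥ Γs)
    (Γi : Fin nx → ℝ) (hΓi : Γi = ψxi + Kiᵀ *ᵥ ψui)
    (ξts : ℝ) (hξts : ξts = ξs - 2 * (Γs ⬝ᵥ fi) + fi ⬝ᵥ (Ps *ᵥ fi) - ψui ⬝ᵥ (Gi⁻¹ *ᵥ ψui))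
    (hSOSC : ∀ (dxi : Fin nx → ℝ) (dui : Fin nu → ℝ) (dt : ℝ)
        (dxs : Fin nx → ℝ) (dus : Fin nu → ℝ) (dx' : Fin nx → ℝ),
      Ai *ᵥ dxi + Bi *ᵥ dui - dxs + dt • fi = 0 →
      As *ᵥ dxs + Bs *ᵥ dus - dx' - dt • fs = 0 →
      ¬(dxi = 0 ∧ dui = 0 ∧ dt = 0 ∧ dxs = 0 ∧ dus = 0 ∧ dx' = 0) →
      0 < dxi ⬝ᵥ (Qxxi *ᵥ dxi) + 2 * (dxi ⬝ᵥ (Qxui *ᵥ dui)) + dui ⬝ᵥ (Quui *ᵥ dui)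
        + 2 * dt * (hxi ⬝ᵥ dxi + hui ⬝ᵥ dui) - 2 * dt * (hxs ⬝ᵥ dxs + hus ⬝ᵥ dus)
        + dxs ⬝ᵥ (Qxxs *ᵥ dxs) + 2 * (dxs ⬝ᵥ (Qxus *ᵥ dus)) + dus ⬝ᵥ (Quus *ᵥ dus)
        + dx' ⬝ᵥ (P' *ᵥ dx')) :
    (fromBlocks (Fi - Kiᵀ * Gi * Ki) (replicateCol (Fin 1) Γi) (replicateRow (Fin 1) Γi) !![ξts]).PosDef := by
  have hGsSymm : Gs.IsSymm := hGs ▸ hQuusSymm.add (hP'Symm.transpose_mul_mul Bs)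
  have hPsSymm : Ps.IsSymm := hPs ▸ hFs ▸
    (hQxxsSymm.add (hP'Symm.transpose_mul_mul As)).sub (hGsSymm.transpose_mul_mul Ks)
  have hGiSymm : Gi.IsSymm := hGi ▸ hQuuiSymm.add (hPsSymm.transpose_mul_mul Bi)
  have hM : (Fi - Kiᵀ * Gi * Ki).IsSymm :=
    hFi ▸ (hQxxiSymm.add (hPsSymm.transpose_mul_mul Ai)).sub (hGiSymm.transpose_mul_mul Ki)
  refine posDef_fromBlocks_of_costToGo_pos hM Γi ξts fun x t hxt => ?_
  have hi := stageCost_add_costToGo_riccati hPsSymm Qxxi Qxui hQuuiSymm Ai Bi hxi fi (-Γs) hui ξs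
    hGi hGiinv rfl hKi (ψx := ψxi) (ψu := ψui) (by rw [hψxi, mulVec_neg, sub_eq_add_neg])
    (by rw [hψui, mulVec_neg, sub_eq_add_neg]) x t
  have hξi : fi ⬝ᵥ (Ps *ᵥ fi) + 2 * (-Γs ⬝ᵥ fi) + ξs - ψui ⬝ᵥ (Gi⁻¹ *ᵥ ψui) = ξts := by
    rw [hξts, neg_dotProduct]
    ring
  rw [← hFi, ← hΓi, hξi] at hi
  set ui := Ki *ᵥ x - t • (Gi⁻¹ *ᵥ ψui)
  set xs := Ai *ᵥ x + Bi *ᵥ ui + t • fi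
  -- the `s`-stage enters `q` and `S` with `Δt` replaced by `-Δt`
  have hs := stageCost_add_costToGo_riccati hP'Symm Qxxs Qxus hQuusSymm As Bs hxs fs 0 hus 0
    hGs hGsinv hHs hKs (ψx := ψxs) (ψu := ψus) (by simp [hψxs]) (by simp [hψus]) xs (-t)
  rw [← hFs, ← hPs, ← hΓs, zero_dotProduct, mul_zero, add_zero, add_zero, ← hξs] at hs
  set us := Ks *ᵥ xs - -t • (Gs⁻¹ *ᵥ ψus)
  set x' := As *ᵥ xs + Bs *ᵥ us + -t • fs
  calc 0 < _ := hSOSC x ui t xs us x' (by simp [xs]) (by simp [x'])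
        fun h => hxt ⟨h.1, h.2.2.1⟩
    _ = stageCost Qxxi Qxui Quui hxi hui x ui t
          + (stageCost Qxxs Qxus Quus hxs hus xs us (-t) + costToGo P' 0 0 x' (-t)) := by
      simp only [stageCost, costToGo, zero_dotProduct]
      ring
    _ = _ := by rw [hs, costToGo_neg_time, hi]
end
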